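/- arXiv:2511.01566 — 7 statements merged into one kernel-verified Lean document; each statement's English description precedes it below -/
import Mathlib

section
/- Let γ : ℝ → ℝ^{N+1} be a C² curve such that ⟨γ''(s), γ(s)⟩ = 0 for all s (the cone condition) and ‖γ'(s)‖ is a nonzero constant. Then the function I(s) = ‖γ(s)‖² − ⟨γ(s), γ'(s)⟩² / ‖γ'(s)‖² is constant in s. -/
open scoped RealInnerProductSpace

theorem stmt0 (N : ℕ) (γ : ℝ → EuclideanSpace ℝ (Fin (N + 1))) (c : ℝ)
    (hγ : ContDiff ℝ 2 γ)
    (hcone : ∀ s : ℝ, ⟪deriv (deriv γ) s, γ s⟫ = 0)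
    (hc : 0 < c) (hspeed : ∀ s : ℝ, ‖deriv γ s‖ = c) :
    ∀ s t : ℝ,
      ‖γ s‖ ^ 2 - ⟪γ s, deriv γ s⟫ ^ 2 / ‖deriv γ s‖ ^ 2 =
      ‖γ t‖ ^ 2 - ⟪γ t, deriv γ t⟫ ^ 2 / ‖deriv γ t‖ ^ 2 := by
  have hγ2 : ContDiff ℝ (1 + 1) γ := hγ.of_le (by norm_num)
  obtain ⟨hdiff, -, hγ'⟩ := contDiff_succ_iff_deriv.mp hγ2
  have hdiff' : Differentiable ℝ (deriv γ) := hγ'.differentiable one_ne_zero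
  set f : ℝ → ℝ := fun s => ‖γ s‖ ^ 2 - ⟪γ s, deriv γ s⟫ ^ 2 / c ^ 2 with hf
  have key : ∀ s, HasDerivAt f 0 s := by
    intro s
    have hγs : HasDerivAt γ (deriv γ s) s := (hdiff s).hasDerivAt
    have hγ's : HasDerivAt (deriv γ) (deriv (deriv γ) s) s := (hdiff' s).hasDerivAt
    have h1 : HasDerivAt (fun t => ⟪γ t, γ t⟫) (2 * ⟪γ s, deriv γ s⟫) s := by
      have : HasDerivAt (fun t => ⟪γ t, γ t⟫) (⟪γ s, deriv γ s⟫ + ⟪deriv γ s, γ s⟫) s :=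
        hγs.inner ℝ hγs
      convert this using 1
      rw [real_inner_comm]; ring
    have hn : HasDerivAt (fun t => ‖γ t‖ ^ 2) (2 * ⟪γ s, deriv γ s⟫) s := by
      convert h1 using 2 with t
      rw [real_inner_self_eq_norm_sq]
    have h2' : HasDerivAt (fun t => ⟪γ t, deriv γ t⟫) (c ^ 2) s := by
      have : HasDerivAt (fun t => ⟪γ t, deriv γ t⟫)
          (⟪γ s, deriv (deriv γ) s⟫ + ⟪deriv γ s, deriv γ s⟫) s := hγs.inner ℝ hγ's
      convert this using 1
      have h0 : ⟪γ s, deriv (deriv γ) s⟫ = 0 := by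
        rw [real_inner_comm]; exact hcone s
      rw [h0, real_inner_self_eq_norm_sq, hspeed s]
      ring
    have h3 : HasDerivAt (fun t => ⟪γ t, deriv γ t⟫ ^ 2 / c ^ 2)
        (2 * ⟪γ s, deriv γ s⟫) s := by
      have : HasDerivAt (fun t => ⟪γ t, deriv γ t⟫ ^ 2 / c ^ 2)
          (((2 : ℕ) : ℝ) * ⟪γ s, deriv γ s⟫ ^ (2 - 1) * c ^ 2 / c ^ 2) s :=
        (h2'.pow 2).div_const (c ^ 2)
      convert this using 1
      field_simp
      norm_num
    have : HasDerivAt (fun t => ‖γ t‖ ^ 2 - ⟪γ t, deriv γ t⟫ ^ 2 / c ^ 2)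
        (2 * ⟪γ s, deriv γ s⟫ - 2 * ⟪γ s, deriv γ s⟫) s := hn.sub h3
    simpa using this
  intro s t
  have hconst : f s = f t :=
    is_const_of_deriv_eq_zero (fun z => (key z).differentiableAt)
      (fun z => (key z).deriv) s t
  simpa only [hf, hspeed s, hspeed t] using hconst
end

section
/- Let γ : ℝ → ℝ^{N+1} be a C² unit-speed curve with ⟨γ''(s), γ(s)⟩ = 0 for all s, and suppose the first integral I = ‖γ(0)‖² − ⟨γ(0), γ'(0)⟩² equals 0 and γ(0) ≠ 0. Then γ(s) is parallel to γ'(s) for every s where γ(s) ≠ 0; that is, γ(s) and γ'(s) are linearly dependent for all such s. -/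
open scoped RealInnerProductSpace

theorem stmt2 (N : ℕ) (γ : ℝ → EuclideanSpace ℝ (Fin (N + 1)))
    (hγ : ContDiff ℝ 2 γ)
    (hspeed : ∀ s : ℝ, ‖deriv γ s‖ = 1)
    (hcone : ∀ s : ℝ, ⟪deriv (deriv γ) s, γ s⟫ = 0)
    (hI : ‖γ 0‖ ^ 2 - ⟪γ 0, deriv γ 0⟫ ^ 2 = 0)
    (h0 : γ 0 ≠ 0) :
    ∀ s : ℝ, γ s ≠ 0 → ∃ k : ℝ, γ s = k • deriv γ s := by
  have hγd : Differentiable ℝ γ := hγ.differentiable (by norm_num)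
  have hγ2 : ContDiff ℝ 1 (deriv γ) := by
    have := (contDiff_succ_iff_deriv (n := 1)).mp (by norm_num at hγ ⊢; exact hγ)
    exact this.2.2
  have hγ'd : Differentiable ℝ (deriv γ) := hγ2.differentiable (by norm_num)
  set f : ℝ → ℝ := fun s => ‖γ s‖ ^ 2 - ⟪γ s, deriv γ s⟫ ^ 2 with hf
  have hfderiv : ∀ s : ℝ, HasDerivAt f 0 s := by
    intro s
    have h1 : HasDerivAt γ (deriv γ s) s := (hγd s).hasDerivAt
    have h2 : HasDerivAt (deriv γ) (deriv (deriv γ) s) s := (hγ'd s).hasDerivAt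
    have hA : HasDerivAt (fun t => ⟪γ t, γ t⟫)
        (⟪γ s, deriv γ s⟫ + ⟪deriv γ s, γ s⟫) s := h1.inner ℝ h1
    have hB : HasDerivAt (fun t => ⟪γ t, deriv γ t⟫)
        (⟪γ s, deriv (deriv γ) s⟫ + ⟪deriv γ s, deriv γ s⟫) s := h1.inner ℝ h2
    have hB' : HasDerivAt (fun t => ⟪γ t, deriv γ t⟫) 1 s := by
      have e1 : ⟪γ s, deriv (deriv γ) s⟫ = 0 := by
        rw [real_inner_comm]; exact hcone s
      have e2 : ⟪deriv γ s, deriv γ s⟫ = 1 := by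
        rw [real_inner_self_eq_norm_sq, hspeed s]; norm_num
      rw [e1, e2, zero_add] at hB; exact hB
    have hB2 : HasDerivAt (fun t => ⟪γ t, deriv γ t⟫ ^ 2)
        (2 * ⟪γ s, deriv γ s⟫ * 1) s := by
      simpa using hB'.fun_pow 2
    have hA' : HasDerivAt (fun t => ‖γ t‖ ^ 2) (2 * ⟪γ s, deriv γ s⟫) s := by
      have : (fun t => ‖γ t‖ ^ 2) = fun t => ⟪γ t, γ t⟫ := by
        funext t; rw [real_inner_self_eq_norm_sq]
      rw [this]
      convert hA using 1
      rw [real_inner_comm (deriv γ s) (γ s)]; ring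
    have := hA'.sub hB2
    rw [show (0:ℝ) = 2 * ⟪γ s, deriv γ s⟫ - 2 * ⟪γ s, deriv γ s⟫ * 1 by ring]; exact this
  have hconst : ∀ s : ℝ, f s = f 0 := by
    intro s
    have hd : Differentiable ℝ f := fun x => (hfderiv x).differentiableAt
    exact is_const_of_deriv_eq_zero hd (fun x => (hfderiv x).deriv) s 0
  intro s hs
  have hI' : ‖γ s‖ ^ 2 - ⟪γ s, deriv γ s⟫ ^ 2 = 0 := by
    have := hconst s; simp only [f] at this; rw [this]; exact hI
  have hγ's : deriv γ s ≠ 0 := by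
    intro h; have := hspeed s; rw [h] at this; simp at this
  have habs : ‖⟪deriv γ s, γ s⟫‖ = ‖deriv γ s‖ * ‖γ s‖ := by
    rw [hspeed s, one_mul, Real.norm_eq_abs, real_inner_comm]
    have : ⟪γ s, deriv γ s⟫ ^ 2 = ‖γ s‖ ^ 2 := by linarith
    have h2 : |⟪γ s, deriv γ s⟫| ^ 2 = ‖γ s‖ ^ 2 := by rw [sq_abs]; exact this
    nlinarith [abs_nonneg ⟪γ s, deriv γ s⟫, norm_nonneg (γ s), sq_nonneg (|⟪γ s, deriv γ s⟫| - ‖γ s‖)]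
  obtain ⟨r, _, hr⟩ := (norm_inner_eq_norm_iff (𝕜 := ℝ) hγ's hs).mp habs
  exact ⟨r, hr⟩
end

section
/- Let γ : ℝ → ℝ^{N+1} be a C² unit-speed curve with ⟨γ(s), γ'(s)⟩ = s and ‖γ(s)‖² = s² + 1 for all s. Define γ̃(s̃) = cos(s̃) · γ(tan s̃) for s̃ ∈ (−π/2, π/2). Then ‖γ̃(s̃)‖ = 1 and ‖γ̃'(s̃)‖ = ‖γ'(tan s̃)‖ = 1 for all s̃ ∈ (−π/2, π/2); i.e., the radial projection of γ to the unit sphere is parametrized by arc length. -/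
open scoped RealInnerProductSpace

theorem stmt6 (N : ℕ) (γ : ℝ → EuclideanSpace ℝ (Fin (N + 1)))
    (hγ : ContDiff ℝ 2 γ)
    (hspeed : ∀ s : ℝ, ‖deriv γ s‖ = 1)
    (hin : ∀ s : ℝ, ⟪γ s, deriv γ s⟫ = s)
    (hnorm : ∀ s : ℝ, ‖γ s‖ ^ 2 = s ^ 2 + 1)
    (γt : ℝ → EuclideanSpace ℝ (Fin (N + 1)))
    (hγt : ∀ t : ℝ, γt t = Real.cos t • γ (Real.tan t)) :
    ∀ t ∈ Set.Ioo (-(Real.pi / 2)) (Real.pi / 2),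
      ‖γt t‖ = 1 ∧ ‖deriv γt t‖ = 1 ∧ ‖deriv γ (Real.tan t)‖ = 1 := by
  intro t ht
  have hcos : 0 < Real.cos t := Real.cos_pos_of_mem_Ioo ht
  have hcne : Real.cos t ≠ 0 := ne_of_gt hcos
  set s := Real.tan t with hs
  have hsc : Real.sin t ^ 2 + Real.cos t ^ 2 = 1 := Real.sin_sq_add_cos_sq t
  have htan : s ^ 2 + 1 = 1 / Real.cos t ^ 2 := by
    rw [hs, Real.tan_eq_sin_div_cos]
    field_simp
    exact hsc
  have h1 : ‖γt t‖ = 1 := by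
    have hsq : ‖γt t‖ ^ 2 = 1 := by
      rw [hγt, norm_smul, mul_pow, hnorm, htan, Real.norm_eq_abs, abs_of_pos hcos]
      field_simp
    nlinarith [norm_nonneg (γt t)]
  have hγd : Differentiable ℝ γ := hγ.differentiable (by norm_num)
  have htand : HasDerivAt Real.tan (1 / Real.cos t ^ 2) t := Real.hasDerivAt_tan hcne
  have hcomp : HasDerivAt (fun x => γ (Real.tan x))
      ((1 / Real.cos t ^ 2) • deriv γ s) t :=
    ((hγd s).hasDerivAt).scomp t htand
  have hsmul : HasDerivAt (fun x => Real.cos x • γ (Real.tan x))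
      (Real.cos t • ((1 / Real.cos t ^ 2) • deriv γ s) + (-Real.sin t) • γ s) t :=
    (Real.hasDerivAt_cos t).smul hcomp
  have hfun : γt = fun x => Real.cos x • γ (Real.tan x) := funext hγt
  have hderiv : deriv γt t
      = Real.cos t • ((1 / Real.cos t ^ 2) • deriv γ s) + (-Real.sin t) • γ s := by
    rw [hfun]; exact hsmul.deriv
  have h2 : ‖deriv γt t‖ = 1 := by
    have hsq : ‖deriv γt t‖ ^ 2 = 1 := by
      rw [hderiv, smul_smul, @norm_add_sq_real, norm_smul, norm_smul,
        real_inner_smul_left, real_inner_smul_right, mul_pow, mul_pow,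
        real_inner_comm (γ s) (deriv γ s), hin, hnorm, Real.norm_eq_abs, Real.norm_eq_abs, hspeed]
      have hsval : s = Real.sin t / Real.cos t := Real.tan_eq_sin_div_cos t
      rw [hsval]
      rw [sq_abs, sq_abs]
      field_simp
      linear_combination (Real.sin t ^ 2 - 1) * hsc
    nlinarith [norm_nonneg (deriv γt t)]
  exact ⟨h1, h2, hspeed s⟩
end

section
/- Let γ : ℝ → ℝ^{N+1} be a C² curve with ‖γ(s)‖² = s² + 1 for all s, and define γ̃(s̃) = cos(s̃) · γ(tan s̃) for s̃ ∈ (−π/2, π/2). Then γ̃''(s̃) = −cos(s̃) · γ(tan s̃) + (1/cos³ s̃) · γ''(tan s̃) for all s̃ ∈ (−π/2, π/2). -/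
open scoped RealInnerProductSpace

theorem stmt7 (N : ℕ) (γ : ℝ → EuclideanSpace ℝ (Fin (N + 1)))
    (hγ : ContDiff ℝ 2 γ)
    (hnorm : ∀ s : ℝ, ‖γ s‖ ^ 2 = s ^ 2 + 1)
    (γt : ℝ → EuclideanSpace ℝ (Fin (N + 1)))
    (hγt : ∀ t : ℝ, γt t = Real.cos t • γ (Real.tan t)) :
    ∀ t ∈ Set.Ioo (-(Real.pi / 2)) (Real.pi / 2),
      deriv (deriv γt) t =
        (-Real.cos t) • γ (Real.tan t) +
          (1 / Real.cos t ^ 3) • deriv (deriv γ) (Real.tan t) := by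
  have hγd : Differentiable ℝ γ := hγ.differentiable (by norm_num)
  have hγ'd : Differentiable ℝ (deriv γ) :=
    (hγ.iterate_deriv' 1 1).differentiable (by norm_num)
  set g : ℝ → EuclideanSpace ℝ (Fin (N + 1)) := fun t =>
    (-Real.sin t) • γ (Real.tan t) + (Real.cos t)⁻¹ • deriv γ (Real.tan t) with hg
  have hcosne : ∀ t ∈ Set.Ioo (-(Real.pi / 2)) (Real.pi / 2), Real.cos t ≠ 0 := by
    intro t ht
    exact ne_of_gt (Real.cos_pos_of_mem_Ioo ht)
  have key1 : ∀ t ∈ Set.Ioo (-(Real.pi / 2)) (Real.pi / 2), HasDerivAt γt (g t) t := by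
    intro t ht
    have hc := hcosne t ht
    have htan : HasDerivAt Real.tan (1 / Real.cos t ^ 2) t := Real.hasDerivAt_tan hc
    have hcomp : HasDerivAt (fun u => γ (Real.tan u))
        ((1 / Real.cos t ^ 2) • deriv γ (Real.tan t)) t :=
      (hγd.differentiableAt.hasDerivAt (x := Real.tan t)).scomp t htan
    have hcos : HasDerivAt Real.cos (-Real.sin t) t := Real.hasDerivAt_cos t
    have := hcos.smul hcomp
    have heq : HasDerivAt (fun u => Real.cos u • γ (Real.tan u))
        (Real.cos t • ((1 / Real.cos t ^ 2) • deriv γ (Real.tan t)) +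
          (-Real.sin t) • γ (Real.tan t)) t := this
    have : HasDerivAt γt
        (Real.cos t • ((1 / Real.cos t ^ 2) • deriv γ (Real.tan t)) +
          (-Real.sin t) • γ (Real.tan t)) t := by
      refine heq.congr_of_eventuallyEq ?_
      filter_upwards with u using (hγt u)
    convert this using 1
    rw [hg]
    simp only [smul_smul]
    match_scalars <;> field_simp <;> ring
  intro t ht
  have hc := hcosne t ht
  have hopen : IsOpen (Set.Ioo (-(Real.pi / 2)) (Real.pi / 2)) := isOpen_Ioo
  have hev : deriv γt =ᶠ[nhds t] g := by
    filter_upwards [hopen.mem_nhds ht] with u hu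
    exact (key1 u hu).deriv
  rw [hev.deriv_eq]
  -- now compute deriv g t
  have htan : HasDerivAt Real.tan (1 / Real.cos t ^ 2) t := Real.hasDerivAt_tan hc
  have hcomp1 : HasDerivAt (fun u => γ (Real.tan u))
      ((1 / Real.cos t ^ 2) • deriv γ (Real.tan t)) t :=
    (hγd.differentiableAt.hasDerivAt (x := Real.tan t)).scomp t htan
  have hcomp2 : HasDerivAt (fun u => deriv γ (Real.tan u))
      ((1 / Real.cos t ^ 2) • deriv (deriv γ) (Real.tan t)) t :=
    (hγ'd.differentiableAt.hasDerivAt (x := Real.tan t)).scomp t htan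
  have hsin : HasDerivAt (fun u => -Real.sin u) (-Real.cos t) t :=
    (Real.hasDerivAt_sin t).neg
  have hinv : HasDerivAt (fun u => (Real.cos u)⁻¹)
      (-(-Real.sin t) / Real.cos t ^ 2) t := (Real.hasDerivAt_cos t).inv hc
  have h1 := hsin.smul hcomp1
  have h2 := hinv.smul hcomp2
  have hG : HasDerivAt g
      (((-Real.sin t) • ((1 / Real.cos t ^ 2) • deriv γ (Real.tan t)) +
          (-Real.cos t) • γ (Real.tan t)) +
        ((Real.cos t)⁻¹ • ((1 / Real.cos t ^ 2) • deriv (deriv γ) (Real.tan t)) +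
          (-(-Real.sin t) / Real.cos t ^ 2) • deriv γ (Real.tan t))) t := h1.add h2
  rw [hG.deriv]
  match_scalars <;> field_simp <;> ring
end

section
/- Let γ̃ : (−π/2, π/2) → ℝ^{N+1} be a C² curve with ‖γ̃(s̃)‖ = 1 and ‖γ̃'(s̃)‖ = 1 for all s̃, and define γ(s) = √(s² + 1) · γ̃(arctan s) for s ∈ ℝ. Then γ''(s) = (γ̃(arctan s) + γ̃''(arctan s)) / (s² + 1)^{3/2} for all s ∈ ℝ. -/
open scoped RealInnerProductSpace

theorem stmt8 (N : ℕ) (γt : ℝ → EuclideanSpace ℝ (Fin (N + 1)))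
    (hγt : ContDiffOn ℝ 2 γt (Set.Ioo (-(Real.pi / 2)) (Real.pi / 2)))
    (hnorm : ∀ t ∈ Set.Ioo (-(Real.pi / 2)) (Real.pi / 2), ‖γt t‖ = 1)
    (hspeed : ∀ t ∈ Set.Ioo (-(Real.pi / 2)) (Real.pi / 2), ‖deriv γt t‖ = 1)
    (γ : ℝ → EuclideanSpace ℝ (Fin (N + 1)))
    (hγ : ∀ s : ℝ, γ s = Real.sqrt (s ^ 2 + 1) • γt (Real.arctan s)) :
    ∀ s : ℝ,
      deriv (deriv γ) s =
        (((s ^ 2 + 1 : ℝ) ^ ((3 : ℝ) / 2))⁻¹) •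
          (γt (Real.arctan s) + deriv (deriv γt) (Real.arctan s)) := by
  have hI : IsOpen (Set.Ioo (-(Real.pi / 2)) (Real.pi / 2)) := isOpen_Ioo
  have hmem : ∀ s : ℝ, Real.arctan s ∈ Set.Ioo (-(Real.pi / 2)) (Real.pi / 2) :=
    fun s => ⟨Real.neg_pi_div_two_lt_arctan s, Real.arctan_lt_pi_div_two s⟩
  have hpos : ∀ s : ℝ, (0:ℝ) < s ^ 2 + 1 := fun s => by positivity
  have hrpos : ∀ s : ℝ, 0 < Real.sqrt (s ^ 2 + 1) := fun s => Real.sqrt_pos.mpr (hpos s)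
  have hrsq : ∀ s : ℝ, Real.sqrt (s ^ 2 + 1) ^ 2 = s ^ 2 + 1 :=
    fun s => Real.sq_sqrt (hpos s).le
  have hd1 : ∀ t ∈ Set.Ioo (-(Real.pi / 2)) (Real.pi / 2), HasDerivAt γt (deriv γt t) t := by
    intro t ht
    exact ((hγt.differentiableOn two_ne_zero).differentiableAt (hI.mem_nhds ht)).hasDerivAt
  have hder : ContDiffOn ℝ 1 (deriv γt) (Set.Ioo (-(Real.pi / 2)) (Real.pi / 2)) :=
    hγt.deriv_of_isOpen hI (by norm_num)
  have hd2 : ∀ t ∈ Set.Ioo (-(Real.pi / 2)) (Real.pi / 2),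
      HasDerivAt (deriv γt) (deriv (deriv γt) t) t := by
    intro t ht
    exact ((hder.differentiableOn one_ne_zero).differentiableAt (hI.mem_nhds ht)).hasDerivAt
  have hsqrt : ∀ s : ℝ, HasDerivAt (fun s : ℝ => Real.sqrt (s ^ 2 + 1))
      (s / Real.sqrt (s ^ 2 + 1)) s := by
    intro s
    have h1 : HasDerivAt (fun s : ℝ => s ^ 2 + 1) (2 * s) s := by
      simpa using (hasDerivAt_pow 2 s).add_const 1
    have h2 := (Real.hasDerivAt_sqrt (ne_of_gt (hpos s))).comp s h1
    refine h2.congr_deriv ?_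
    have := (hrpos s).ne'
    field_simp
  have hu : ∀ s : ℝ, HasDerivAt (fun s : ℝ => γt (Real.arctan s))
      ((1 / (1 + s ^ 2)) • deriv γt (Real.arctan s)) s := by
    intro s
    exact HasDerivAt.scomp s (hd1 _ (hmem s)) (Real.hasDerivAt_arctan s)
  have hv : ∀ s : ℝ, HasDerivAt (fun s : ℝ => deriv γt (Real.arctan s))
      ((1 / (1 + s ^ 2)) • deriv (deriv γt) (Real.arctan s)) s := by
    intro s
    exact HasDerivAt.scomp s (hd2 _ (hmem s)) (Real.hasDerivAt_arctan s)
  have hγ1 : ∀ s : ℝ, HasDerivAt γ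
      (Real.sqrt (s ^ 2 + 1) • ((1 / (1 + s ^ 2)) • deriv γt (Real.arctan s)) +
        (s / Real.sqrt (s ^ 2 + 1)) • γt (Real.arctan s)) s := by
    intro s
    have h : γ = fun s => Real.sqrt (s ^ 2 + 1) • γt (Real.arctan s) := funext hγ
    rw [h]
    exact (hsqrt s).smul (hu s)
  have hderivγ : deriv γ = fun s =>
      Real.sqrt (s ^ 2 + 1) • ((1 / (1 + s ^ 2)) • deriv γt (Real.arctan s)) +
        (s / Real.sqrt (s ^ 2 + 1)) • γt (Real.arctan s) :=
    funext fun s => (hγ1 s).deriv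
  intro s
  rw [hderivγ]
  have ha : HasDerivAt (fun s : ℝ => s / Real.sqrt (s ^ 2 + 1))
      ((1 * Real.sqrt (s ^ 2 + 1) - id s * (s / Real.sqrt (s ^ 2 + 1))) /
        (Real.sqrt (s ^ 2 + 1)) ^ 2) s := (hasDerivAt_id s).div (hsqrt s) (hrpos s).ne'
  have hc2 : HasDerivAt (fun s : ℝ => 1 / (1 + s ^ 2))
      ((0 * (1 + s ^ 2) - 1 * (2 * s)) / (1 + s ^ 2) ^ 2) s := by
    have h1 : HasDerivAt (fun s : ℝ => 1 + s ^ 2) (2 * s) s := by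
      simpa using ((hasDerivAt_pow 2 s).const_add 1)
    exact (hasDerivAt_const s (1:ℝ)).div h1 (by positivity)
  have hD := ((hsqrt s).smul (hc2.smul (hv s))).add (ha.smul (hu s))
  refine hD.deriv.trans ?_
  simp only [Pi.smul_apply']
  have hrne : Real.sqrt (s ^ 2 + 1) ≠ 0 := (hrpos s).ne'
  have hr2 : Real.sqrt (s ^ 2 + 1) ^ 2 = s ^ 2 + 1 := hrsq s
  have hx : (s ^ 2 + 1 : ℝ) ^ ((3:ℝ)/2) = Real.sqrt (s ^ 2 + 1) ^ 3 := by
    rw [show (3:ℝ)/2 = 1 + 1/2 by norm_num, Real.rpow_add (hpos s), Real.rpow_one,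
      ← Real.sqrt_eq_rpow]
    linear_combination (-(Real.sqrt (s ^ 2 + 1))) * hr2
  rw [hx]
  set r := Real.sqrt (s ^ 2 + 1) with hrdef
  have h1s : (1:ℝ) + s ^ 2 = r ^ 2 := by rw [hr2]; ring
  rw [h1s]
  match_scalars
  · field_simp
  · field_simp
    ring
  · simp only [id_eq]
    field_simp
    linear_combination hr2
end

section
/- Let γ̃ : (−π/2, π/2) → ℝ^{N+1} be a C² unit-speed curve on the unit sphere (‖γ̃‖ = 1, ‖γ̃'‖ = 1), and let γ(s) = √(s² + 1) · γ̃(arctan s). Then ⟨γ''(s), γ(s)⟩ = 0 for all s ∈ ℝ. -/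
open scoped RealInnerProductSpace

theorem stmt10 (N : ℕ) (γt : ℝ → EuclideanSpace ℝ (Fin (N + 1)))
    (hγt : ContDiffOn ℝ 2 γt (Set.Ioo (-(Real.pi / 2)) (Real.pi / 2)))
    (hnorm : ∀ t ∈ Set.Ioo (-(Real.pi / 2)) (Real.pi / 2), ‖γt t‖ = 1)
    (hspeed : ∀ t ∈ Set.Ioo (-(Real.pi / 2)) (Real.pi / 2), ‖deriv γt t‖ = 1)
    (γ : ℝ → EuclideanSpace ℝ (Fin (N + 1)))
    (hγ : ∀ s : ℝ, γ s = Real.sqrt (s ^ 2 + 1) • γt (Real.arctan s)) :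
    ∀ s : ℝ, ⟪deriv (deriv γ) s, γ s⟫ = 0 := by
  have hopen : IsOpen (Set.Ioo (-(Real.pi / 2)) (Real.pi / 2)) := isOpen_Ioo
  have hmem : ∀ x : ℝ, Real.arctan x ∈ Set.Ioo (-(Real.pi / 2)) (Real.pi / 2) := fun x =>
    ⟨Real.neg_pi_div_two_lt_arctan x, Real.arctan_lt_pi_div_two x⟩
  set d := deriv γt with hdd
  set c : ℝ → EuclideanSpace ℝ (Fin (N + 1)) := γt ∘ Real.arctan with hcc
  set v : ℝ → EuclideanSpace ℝ (Fin (N + 1)) :=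
    fun x => (1 / (1 + x ^ 2)) • d (Real.arctan x) with hvv
  have hqpos : ∀ x : ℝ, (0:ℝ) < 1 + x ^ 2 := fun x => by positivity
  -- derivative of c
  have hγt' : ∀ x : ℝ, HasDerivAt γt (d (Real.arctan x)) (Real.arctan x) := by
    intro x
    have := (hγt.contDiffAt (hopen.mem_nhds (hmem x))).differentiableAt (by norm_num)
    exact this.hasDerivAt
  have hc' : ∀ x : ℝ, HasDerivAt c (v x) x := by
    intro x
    have h := HasDerivAt.scomp (h := Real.arctan) (x := x) (hγt' x)
      (Real.hasDerivAt_arctan x)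
    simpa [hcc, hvv] using h
  have hcnorm : ∀ x : ℝ, ‖c x‖ = 1 := fun x => hnorm _ (hmem x)
  have hvnorm : ∀ x : ℝ, ‖v x‖ = 1 / (1 + x ^ 2) := by
    intro x
    rw [hvv]
    rw [norm_smul, hspeed _ (hmem x), mul_one, Real.norm_eq_abs,
      abs_of_pos (by positivity)]
  -- v is differentiable
  have hdC1 : ContDiffOn ℝ 1 d (Set.Ioo (-(Real.pi / 2)) (Real.pi / 2)) := by
    have := hγt.deriv_of_isOpen hopen (m := 1) (by norm_num)
    exact this
  have hvdiff : ∀ x : ℝ, DifferentiableAt ℝ v x := by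
    intro x
    have h1 : DifferentiableAt ℝ (fun x : ℝ => 1 / (1 + x ^ 2)) x := by
      apply DifferentiableAt.div (differentiableAt_const 1)
      · fun_prop
      · exact ne_of_gt (hqpos x)
    have h2 : DifferentiableAt ℝ (fun x : ℝ => d (Real.arctan x)) x := by
      have hdat : DifferentiableAt ℝ d (Real.arctan x) :=
        (hdC1.contDiffAt (hopen.mem_nhds (hmem x))).differentiableAt (by norm_num)
      exact hdat.comp x (Real.hasDerivAt_arctan x).differentiableAt
    exact h1.smul h2
  have hv' : ∀ x : ℝ, HasDerivAt v (deriv v x) x := fun x => (hvdiff x).hasDerivAt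
  -- ⟪v, c⟫ = 0
  have hvc : ∀ x : ℝ, ⟪v x, c x⟫ = 0 := by
    intro x
    have hF : HasDerivAt (fun t => ⟪c t, c t⟫) (⟪c x, v x⟫ + ⟪v x, c x⟫) x :=
      HasDerivAt.inner ℝ (hc' x) (hc' x)
    have hFconst : (fun t => ⟪c t, c t⟫) = fun _ => (1:ℝ) := by
      funext t
      rw [real_inner_self_eq_norm_mul_norm, hcnorm, mul_one]
    rw [hFconst] at hF
    have h0 : ⟪c x, v x⟫ + ⟪v x, c x⟫ = 0 := hF.unique (hasDerivAt_const x 1)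
    linarith [real_inner_comm (c x) (v x)]
  -- ⟪deriv v, c⟫ = -‖v‖²
  have hv'c : ∀ x : ℝ, ⟪deriv v x, c x⟫ = -(1 / (1 + x ^ 2)) ^ 2 := by
    intro x
    have hG : HasDerivAt (fun t => ⟪v t, c t⟫) (⟪v x, v x⟫ + ⟪deriv v x, c x⟫) x :=
      HasDerivAt.inner ℝ (hv' x) (hc' x)
    have hGconst : (fun t => ⟪v t, c t⟫) = fun _ => (0:ℝ) := funext hvc
    rw [hGconst] at hG
    have h0 : ⟪v x, v x⟫ + ⟪deriv v x, c x⟫ = 0 := hG.unique (hasDerivAt_const x 0)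
    have : ⟪v x, v x⟫ = (1 / (1 + x ^ 2)) ^ 2 := by
      rw [real_inner_self_eq_norm_mul_norm, hvnorm]; ring
    linarith [this ▸ h0]
  -- sqrt facts
  set u : ℝ → ℝ := fun x => Real.sqrt (x ^ 2 + 1) with huu
  have hupos : ∀ x : ℝ, 0 < u x := fun x => Real.sqrt_pos.2 (by positivity)
  have husq : ∀ x : ℝ, u x ^ 2 = x ^ 2 + 1 := fun x => Real.sq_sqrt (by positivity)
  have hu' : ∀ x : ℝ, HasDerivAt u (x / u x) x := by
    intro x
    have hq : HasDerivAt (fun x : ℝ => x ^ 2 + 1) (2 * x) x := by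
      simpa using (hasDerivAt_pow 2 x).add_const 1
    have hs : HasDerivAt Real.sqrt (1 / (2 * Real.sqrt (x ^ 2 + 1))) (x ^ 2 + 1) :=
      Real.hasDerivAt_sqrt (by positivity)
    have := hs.comp x hq
    have e : x / u x = 1 / (2 * Real.sqrt (x ^ 2 + 1)) * (2 * x) := by
      simp only [huu]
      field_simp
    rw [e]
    exact this
  -- γ and its derivatives
  have hγfun : γ = fun x => u x • c x := funext hγ
  have hγ' : ∀ x : ℝ, HasDerivAt γ ((x / u x) • c x + u x • v x) x := by
    intro x
    rw [hγfun]
    have := (hu' x).smul (hc' x)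
    rw [add_comm ((x / u x) • c x) (u x • v x)]
    exact this
  have hderivγ : deriv γ = fun x => (x / u x) • c x + u x • v x :=
    funext fun x => (hγ' x).deriv
  intro s
  have ha : HasDerivAt (fun x : ℝ => x / u x)
      ((1 * u s - s * (s / u s)) / u s ^ 2) s :=
    (hasDerivAt_id s).div (hu' s) (ne_of_gt (hupos s))
  have hA : HasDerivAt (fun x : ℝ => (x / u x) • c x)
      ((s / u s) • v s + ((1 * u s - s * (s / u s)) / u s ^ 2) • c s) s :=
    ha.smul (hc' s)
  have hB : HasDerivAt (fun x : ℝ => u x • v x)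
      (u s • deriv v s + (s / u s) • v s) s :=
    (hu' s).smul (hv' s)
  have hγ'' : deriv (deriv γ) s =
      ((s / u s) • v s + ((1 * u s - s * (s / u s)) / u s ^ 2) • c s) +
      (u s • deriv v s + (s / u s) • v s) := by
    rw [hderivγ]
    exact (hA.add hB).deriv
  rw [hγ'', hγ s]
  have hcs : γt (Real.arctan s) = c s := rfl
  have hus : Real.sqrt (s ^ 2 + 1) = u s := rfl
  rw [hcs, hus]
  have h1 : ⟪c s, c s⟫ = 1 := by
    rw [real_inner_self_eq_norm_mul_norm, hcnorm, mul_one]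
  have hvcs := hvc s
  have hv'cs := hv'c s
  clear_value u v c d
  simp only [inner_add_left, real_inner_smul_left, real_inner_smul_right]
  rw [h1, hvcs, hv'cs]
  have hp := hupos s
  have hp2 := husq s
  have hq := hqpos s
  have hr : (1 + s ^ 2) = u s ^ 2 := by rw [hp2]; ring
  rw [hr]
  field_simp
  linear_combination hp2
end

section
/- Let γ̃ : (−π/2, π/2) → ℝ^{N+1} be a C² unit-speed curve on the unit sphere, and let γ(s) = √(s² + 1) · γ̃(arctan s). Then ‖γ'(s)‖ = 1 for all s ∈ ℝ; i.e., the conical lift of a unit-speed spherical curve is unit speed. -/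
open scoped RealInnerProductSpace

theorem stmt11 (N : ℕ) (γt : ℝ → EuclideanSpace ℝ (Fin (N + 1)))
    (hγt : ContDiffOn ℝ 2 γt (Set.Ioo (-(Real.pi / 2)) (Real.pi / 2)))
    (hnorm : ∀ t ∈ Set.Ioo (-(Real.pi / 2)) (Real.pi / 2), ‖γt t‖ = 1)
    (hspeed : ∀ t ∈ Set.Ioo (-(Real.pi / 2)) (Real.pi / 2), ‖deriv γt t‖ = 1)
    (γ : ℝ → EuclideanSpace ℝ (Fin (N + 1)))
    (hγ : ∀ s : ℝ, γ s = Real.sqrt (s ^ 2 + 1) • γt (Real.arctan s)) :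
    ∀ s : ℝ, ‖deriv γ s‖ = 1 := by
  have hopen : IsOpen (Set.Ioo (-(Real.pi/2)) (Real.pi/2)) := isOpen_Ioo
  have hdiff : ∀ t ∈ Set.Ioo (-(Real.pi/2)) (Real.pi/2), HasDerivAt γt (deriv γt t) t := by
    intro t ht
    have : DifferentiableAt ℝ γt t :=
      ((hγt.differentiableOn (by norm_num)) t ht).differentiableAt (hopen.mem_nhds ht)
    exact this.hasDerivAt
  have horth : ∀ t ∈ Set.Ioo (-(Real.pi/2)) (Real.pi/2), ⟪γt t, deriv γt t⟫ = 0 := by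
    intro t ht
    have h1 : HasDerivAt (fun u => ⟪γt u, γt u⟫)
        (⟪γt t, deriv γt t⟫ + ⟪deriv γt t, γt t⟫) t :=
      (hdiff t ht).inner ℝ (hdiff t ht)
    have h2 : (fun u => ⟪γt u, γt u⟫) =ᶠ[nhds t] fun _ => (1:ℝ) := by
      filter_upwards [hopen.mem_nhds ht] with u hu
      rw [real_inner_self_eq_norm_sq, hnorm u hu]; norm_num
    have h3 : HasDerivAt (fun _ : ℝ => (1:ℝ))
        (⟪γt t, deriv γt t⟫ + ⟪deriv γt t, γt t⟫) t :=
      h1.congr_of_eventuallyEq h2.symm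
    have h4 := h3.deriv
    rw [deriv_const] at h4
    have h5 : ⟪deriv γt t, γt t⟫ = ⟪γt t, deriv γt t⟫ := real_inner_comm _ _
    linarith [h4, h5]
  intro s
  set a := Real.arctan s with ha
  have hmem : a ∈ Set.Ioo (-(Real.pi/2)) (Real.pi/2) :=
    ⟨Real.neg_pi_div_two_lt_arctan s, Real.arctan_lt_pi_div_two s⟩
  have hsq : (0:ℝ) < s^2 + 1 := by positivity
  have hsqrtpos : (0:ℝ) < Real.sqrt (s^2+1) := Real.sqrt_pos.mpr hsq
  have hsqrt : HasDerivAt (fun x : ℝ => Real.sqrt (x^2+1)) (s / Real.sqrt (s^2+1)) s := by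
    have h1 : HasDerivAt (fun x : ℝ => x^2+1) (2*s) s := by
      simpa using ((hasDerivAt_pow 2 s).add_const 1)
    have h2 := (Real.hasDerivAt_sqrt (ne_of_gt hsq)).comp s h1
    refine h2.congr_deriv ?_
    field_simp
  have hcomp : HasDerivAt (fun x => γt (Real.arctan x)) ((1/(1+s^2)) • deriv γt a) s :=
    (hdiff a hmem).scomp s (Real.hasDerivAt_arctan s)
  have hγeq : γ = fun x => Real.sqrt (x^2+1) • γt (Real.arctan x) := funext hγ
  have hγ' : HasDerivAt γ
      ((s / Real.sqrt (s^2+1)) • γt a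
        + Real.sqrt (s^2+1) • ((1/(1+s^2)) • deriv γt a)) s := by
    rw [hγeq]
    have := hsqrt.smul hcomp
    refine this.congr_deriv ?_
    module
  rw [hγ'.deriv]
  set c : ℝ := s / Real.sqrt (s^2+1)
  set d : ℝ := Real.sqrt (s^2+1) * (1/(1+s^2))
  have hd : Real.sqrt (s^2+1) • ((1/(1+s^2)) • deriv γt a) = d • deriv γt a := by
    rw [smul_smul]
  rw [hd]
  have hnsq : ‖c • γt a + d • deriv γt a‖^2 = c^2 + d^2 := by
    rw [← real_inner_self_eq_norm_sq]
    rw [inner_add_add_self]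
    have h1 : ⟪γt a, γt a⟫ = 1 := by
      rw [real_inner_self_eq_norm_sq, hnorm a hmem]; norm_num
    have h2 : ⟪deriv γt a, deriv γt a⟫ = 1 := by
      rw [real_inner_self_eq_norm_sq, hspeed a hmem]; norm_num
    have h3 : ⟪deriv γt a, γt a⟫ = 0 := by
      rw [real_inner_comm]; exact horth a hmem
    simp only [real_inner_smul_left, real_inner_smul_right, h1, h2, h3, horth a hmem]
    ring
  have hcd : c^2 + d^2 = 1 := by
    have hsq2 : Real.sqrt (s^2+1)^2 = s^2+1 := Real.sq_sqrt (le_of_lt hsq)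
    simp only [c, d]
    field_simp
    nlinarith [hsq2, hsqrtpos]
  have : ‖c • γt a + d • deriv γt a‖^2 = 1 := by rw [hnsq, hcd]
  nlinarith [norm_nonneg (c • γt a + d • deriv γt a), this]
end
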